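/- arXiv:2209.01123 — 4 statements merged into one kernel-verified Lean document; each statement's English description precedes it below -/
import Mathlib

section
/- Let K be a normal subgroup of a direct product G_1 × G_2 × ⋯ × G_k of nonabelian free groups. If K has nontrivial projection to the factor G_i, then K ∩ G_i is a nontrivial (indeed nonabelian) normal subgroup of G_i. -/
/-!
In a free group commutation is transitive on nontrivial elements: the centralizer of `x ≠ 1` is
free by Nielsen–Schreier and has `x` in its centre, and a free group with nontrivial centre is
cyclic, because a basis element commutes only with its own powers. Hence abelian subgroups are
cyclic, and a nontrivial abelian normal subgroup `⟨z⟩` of a free group `F` forces every conjugate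
of `z` to be `z` or `z⁻¹`; so all squares commute with `z`, hence with each other, and `F` is
abelian (free groups are torsion-free).

For the theorem, pick `x ∈ K` with `x i ≠ 1`. Since `G i` is nonabelian, `x i` is not central, so
some commutator `⁅g, x i⁆ ≠ 1`; it lies in `K ∩ G i` because `K` is normal. Thus `K ∩ G i` is a
nontrivial normal subgroup of `G i`, hence nonabelian.
-/

open Subgroup
open scoped commutatorElement

section TorsionFree

variable {G : Type*} [Group G] [IsMulTorsionFree G] {z : G}

lemma conj_eq_self_or_eq_inv_of_zpowers_normal (hz : (zpowers z).Normal) (g : G) :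
    g * z * g⁻¹ = z ∨ g * z * g⁻¹ = z⁻¹ := by
  rcases eq_or_ne z 1 with rfl | hz1
  · simp
  obtain ⟨m, hm⟩ := hz.conj_mem z (mem_zpowers z) g
  obtain ⟨n, hn⟩ := hz.conj_mem z (mem_zpowers z) g⁻¹
  have hz_pow : z ^ (n * m - 1) = 1 := by
    have : z = z ^ (n * m) := calc
      z = g⁻¹ * (g * z * g⁻¹) * g⁻¹⁻¹ := by group
      _ = (g⁻¹ * z * g⁻¹⁻¹) ^ m := by rw [← hm, conj_zpow]
      _ = z ^ (n * m) := by rw [← hn, zpow_mul]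
    rw [zpow_sub_one, ← this, mul_inv_cancel]
  have hnm : n * m = 1 := by
    have := (IsMulTorsionFree.zpow_eq_one_iff_right hz1).mp hz_pow
    omega
  rcases Int.eq_one_or_neg_one_of_mul_eq_one' hnm with ⟨-, rfl⟩ | ⟨-, rfl⟩
  · exact .inl (by simpa using hm.symm)
  · exact .inr (by simpa using hm.symm)

lemma commute_sq_of_zpowers_normal (hz : (zpowers z).Normal) (g : G) : Commute (g ^ 2) z := by
  have hconj : g ^ 2 * z * (g ^ 2)⁻¹ = g * (g * z * g⁻¹) * g⁻¹ := by rw [sq]; group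
  have hinv : g * z⁻¹ * g⁻¹ = (g * z * g⁻¹)⁻¹ := by group
  refine mul_inv_eq_iff_eq_mul.mp (hconj.trans ?_)
  rcases conj_eq_self_or_eq_inv_of_zpowers_normal hz g with h | h
  · rw [h, h]
  · rw [h, hinv, h, inv_inv]

end TorsionFree

namespace FreeGroup

variable {α : Type*}

def expSum [DecidableEq α] (a : α) : FreeGroup α →* Multiplicative ℤ :=
  FreeGroup.lift fun b => if b = a then Multiplicative.ofAdd 1 else 1

@[simp]
lemma expSum_of [DecidableEq α] (a b : α) :
    expSum a (of b) = if b = a then Multiplicative.ofAdd 1 else 1 :=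
  lift_apply_of

lemma of_mul_of_ne_of_mul_of {a b : α} (h : a ≠ b) :
    (of a : FreeGroup α) * of b ≠ of b * of a := by
  classical
  intro hab
  let f : α → Equiv.Perm (Fin 3) := fun x =>
    if x = a then Equiv.swap 0 1 else if x = b then Equiv.swap 1 2 else 1
  have := congrArg (FreeGroup.lift f) hab
  rw [_root_.map_mul, _root_.map_mul, lift_apply_of, lift_apply_of] at this
  simp only [f, if_pos rfl, if_neg h.symm] at this
  exact absurd this (by decide)

lemma disjoint_zpowers_of {a b : α} (h : a ≠ b) :
    Disjoint (zpowers (of a : FreeGroup α)) (zpowers (of b)) := by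
  classical
  rw [Subgroup.disjoint_def]
  rintro _ ⟨m, rfl⟩ ⟨n, hn⟩
  have := congrArg (Multiplicative.toAdd ∘ expSum a) hn
  simp [h.symm] at this
  simp [this]

instance [Subsingleton α] : IsCyclic (FreeGroup α) := by
  cases isEmpty_or_nonempty α
  · infer_instance
  · have : Unique α := uniqueOfSubsingleton (Classical.arbitrary α)
    infer_instance

end FreeGroup

namespace IsFreeGroup

variable {F : Type*} [Group F] [IsFreeGroup F]

instance : IsMulTorsionFree F :=
  Function.Injective.isMulTorsionFree (toFreeGroup F).toMonoidHom (toFreeGroup F).injective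

lemma isCyclic_of_isMulCommutative [IsMulCommutative F] : IsCyclic F := by
  have : Subsingleton (Generators F) := ⟨fun a b => by
    by_contra h
    apply FreeGroup.of_mul_of_ne_of_mul_of h
    apply (toFreeGroup F).symm.injective
    simp only [_root_.map_mul]
    exact mul_comm' _ _⟩
  exact (toFreeGroup F).isCyclic.mpr inferInstance

/- `⟨w, of a⟩` is abelian, hence cyclic; its generator has exponent sum `±1` in `a`, so it is
`of a` or its inverse. -/
lemma _root_.FreeGroup.mem_zpowers_of_commute_of {α : Type*} {w : FreeGroup α} {a : α}
    (h : Commute w (.of a)) : w ∈ zpowers (.of a) := by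
  classical
  have : IsMulCommutative (closure {w, .of a}) := isMulCommutative_closure <| by
    simp only [Set.mem_insert_iff, Set.mem_singleton_iff]
    rintro x (rfl | rfl) y (rfl | rfl) <;> first | rfl | exact h | exact h.symm
  obtain ⟨g, hcl⟩ := (closure {w, .of a}).isCyclic_iff_exists_zpowers_eq_top.mp
    isCyclic_of_isMulCommutative
  obtain ⟨n, hn⟩ : .of a ∈ zpowers g := hcl ▸ subset_closure (by simp)
  have hn1 : n * Multiplicative.toAdd (FreeGroup.expSum a g) = 1 := by
    simpa [mul_comm] using congrArg (Multiplicative.toAdd ∘ FreeGroup.expSum a) hn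
  have hg : g = .of a ^ n := by
    rcases Int.eq_one_or_neg_one_of_mul_eq_one hn1 with rfl | rfl <;> simp [← hn]
  have hw : w ∈ zpowers g := hcl ▸ subset_closure (by simp)
  exact zpowers_le.mpr (hg ▸ zpow_mem (mem_zpowers _) n) hw

lemma isMulCommutative_of_mem_center {z : F} (hz : z ∈ center F) (hz1 : z ≠ 1) :
    IsMulCommutative F := by
  let e := toFreeGroup F
  have : Subsingleton (Generators F) := ⟨fun a b => by
    by_contra hab
    have hcomm (c : Generators F) : Commute (e z) (.of c) := by
      simpa [Commute, SemiconjBy] using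
        congrArg e (mem_center_iff.mp hz (e.symm (.of c))).symm
    apply hz1
    apply e.injective
    simpa using (FreeGroup.disjoint_zpowers_of hab).le_bot
      ⟨FreeGroup.mem_zpowers_of_commute_of (hcomm a),
        FreeGroup.mem_zpowers_of_commute_of (hcomm b)⟩⟩
  have : IsCyclic F := e.isCyclic.mpr inferInstance
  infer_instance

lemma commute_trans {x u v : F} (hx : x ≠ 1) (hu : Commute u x) (hv : Commute x v) :
    Commute u v := by
  have : IsMulCommutative (centralizer {x}) :=
    isMulCommutative_of_mem_center (z := ⟨x, mem_centralizer_singleton_iff.mpr rfl⟩)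
      (mem_center_iff.mpr fun g => Subtype.ext (mem_centralizer_singleton_iff.mp g.2))
      (by simpa using hx)
  exact congrArg Subtype.val <| mul_comm'
    (⟨u, mem_centralizer_singleton_iff.mpr hu.eq⟩ : centralizer {x})
    ⟨v, mem_centralizer_singleton_iff.mpr hv.eq.symm⟩

lemma commute_of_commute_sq {a b : F} (h : Commute (a ^ 2) (b ^ 2)) : Commute a b := by
  rcases eq_or_ne a 1 with rfl | ha
  · exact Commute.one_left b
  rcases eq_or_ne b 1 with rfl | hb
  · exact Commute.one_right a
  have hab : Commute a (b ^ 2) :=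
    commute_trans (sq_eq_one.not.mpr ha) (Commute.self_pow a 2) h
  exact commute_trans (sq_eq_one.not.mpr hb) hab (Commute.pow_self b 2)

lemma isMulCommutative_of_normal {N : Subgroup F} [IsMulCommutative N] (hN : N.Normal)
    (hbot : N ≠ ⊥) : IsMulCommutative F := by
  obtain ⟨z, rfl⟩ := N.isCyclic_iff_exists_zpowers_eq_top.mp isCyclic_of_isMulCommutative
  have hz : z ≠ 1 := zpowers_eq_bot.not.mp hbot
  exact isMulCommutative_iff.mpr fun a b => commute_of_commute_sq <|
    commute_trans hz (commute_sq_of_zpowers_normal hN a) (commute_sq_of_zpowers_normal hN b).symm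

end IsFreeGroup

lemma Pi.commutatorElement_mulSingle {ι : Type*} [DecidableEq ι] {G : ι → Type*}
    [∀ i, Group (G i)] (i : ι) (g : G i) (x : ∀ i, G i) :
    ⁅Pi.mulSingle i g, x⁆ = Pi.mulSingle i ⁅g, x i⁆ := by
  ext j
  rcases eq_or_ne j i with rfl | hj
  · simp [commutatorElement_def]
  · simp [commutatorElement_def, Pi.mulSingle_eq_of_ne hj]

/-- If `K` is a normal subgroup of a direct product `G_1 × ⋯ × G_k` of
nonabelian free groups and `K` has nontrivial projection to the factor `G i`, then
`K ∩ G_i` (realized as the comap of `K` under the coordinate inclusion) is a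
nontrivial, indeed nonabelian, normal subgroup of `G i`. -/
theorem stmt0 {k : ℕ} (G : Fin k → Type*) [∀ i, Group (G i)] [∀ i, IsFreeGroup (G i)]
    (hna : ∀ i, ∃ a b : G i, a * b ≠ b * a)
    (K : Subgroup (∀ i, G i)) (hK : K.Normal) (i : Fin k)
    (hproj : ∃ x ∈ K, x i ≠ 1) :
    (K.comap (MonoidHom.mulSingle G i)).Normal ∧
    K.comap (MonoidHom.mulSingle G i) ≠ ⊥ ∧
    ∃ a ∈ K.comap (MonoidHom.mulSingle G i), ∃ b ∈ K.comap (MonoidHom.mulSingle G i),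
      a * b ≠ b * a := by
  obtain ⟨x, hxK, hxi⟩ := hproj
  have hnc : ¬IsMulCommutative (G i) := fun _ =>
    let ⟨a, b, hab⟩ := hna i; hab (mul_comm' a b)
  obtain ⟨g, hg⟩ : ∃ g : G i, ⁅g, x i⁆ ≠ 1 := by
    by_contra! h
    exact hnc (IsFreeGroup.isMulCommutative_of_mem_center
      (mem_center_iff.mpr fun g => commutatorElement_eq_one_iff_mul_comm.mp (h g)) hxi)
  set N := K.comap (MonoidHom.mulSingle G i)
  have hN : N.Normal := hK.comap _
  have hgN : ⁅g, x i⁆ ∈ N := by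
    rw [mem_comap, MonoidHom.mulSingle_apply, ← Pi.commutatorElement_mulSingle,
      commutatorElement_def]
    exact K.mul_mem (hK.conj_mem x hxK _) (K.inv_mem hxK)
  have hbot : N ≠ ⊥ := ne_bot_iff_exists_ne_one.mpr ⟨⟨_, hgN⟩, by simpa using hg⟩
  refine ⟨hN, hbot, ?_⟩
  by_contra! h
  have : IsMulCommutative N := isMulCommutative_iff.mpr fun a b => Subtype.ext (h a a.2 b b.2)
  exact hnc (IsFreeGroup.isMulCommutative_of_normal hN hbot)
end

section
/- If H is a finite-index subgroup of a group G, then rk_F(H) = rk_F(G). -/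
/-!
If `f : Fₖ → G` is injective, where `Fₖ` is the product of `k` copies of the free group `F₂`, then
`K = f⁻¹(H)` has finite index in `Fₖ`, so each factor meets `K` in a finite-index subgroup `Lᵢ`
of `F₂`. By Nielsen–Schreier `Lᵢ` is free, and it is nonabelian since it contains nontrivial powers
of both generators, so `F₂` embeds into `Lᵢ`. The product of these embeddings lands in `K`, and
composing with `f` gives an embedding of `Fₖ` into `H`.
-/

/-- `G` contains a direct product of `k` nonabelian free groups, i.e. `rk_F(G) ≥ k`. -/
def HasProdRank (G : Type*) [Group G] (k : ℕ) : Prop :=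
  ∃ f : ((Fin k → FreeGroup Bool)) →* G, Function.Injective f

instance Subgroup.finiteIndex_comap {G G' : Type*} [Group G] [Group G'] (H : Subgroup G)
    [H.FiniteIndex] (f : G' →* G) : (H.comap f).FiniteIndex :=
  ⟨fun h => H.index_ne_zero_of_finite (H.index_eq_zero_of_relIndex_eq_zero
    (H.index_comap f ▸ h))⟩

theorem Subgroup.exists_injective_pi_of_finiteIndex {ι A : Type*} [Finite ι] [Group A]
    {G : ι → Type*} [∀ i, Group (G i)] (K : Subgroup (∀ i, G i)) [K.FiniteIndex]
    (hA : ∀ i (L : Subgroup (G i)), L.FiniteIndex → ∃ j : A →* L, Function.Injective j) :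
    ∃ j : (ι → A) →* K, Function.Injective j := by
  classical
  choose j hj using fun i => hA i (K.comap (MonoidHom.mulSingle G i)) inferInstance
  let Φ : (ι → A) →* ∀ i, G i := MonoidHom.piMap fun i => (Subgroup.subtype _).comp (j i)
  have hΦ : Function.Injective Φ :=
    Pi.map_injective.2 fun i => (Subgroup.subtype_injective _).comp (hj i)
  have hΦK (x : ι → A) : Φ x ∈ K :=
    Subgroup.pi_mem_of_mulSingle_mem _ fun i => (j i (x i)).2
  exact ⟨Φ.codRestrict K hΦK, fun x y hxy => hΦ (congrArg Subtype.val hxy)⟩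

namespace FreeGroup

theorem commute_of_subsingleton {X : Type*} [Subsingleton X] (x y : FreeGroup X) :
    Commute x y := by
  induction x using FreeGroup.induction_on with
  | C1 => exact Commute.one_left y
  | of a =>
    induction y using FreeGroup.induction_on with
    | C1 => exact Commute.one_right _
    | of b => rw [Subsingleton.elim a b]
    | inv_of b hb => exact hb.inv_right
    | mul u v hu hv => exact hu.mul_right hv
  | inv_of a ha => exact ha.inv_left
  | mul u v hu hv => exact hu.mul_left hv

private def unipotentUpper : (Matrix (Fin 2) (Fin 2) ℤ)ˣ :=
  ⟨!![1, 1; 0, 1], !![1, -1; 0, 1],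
    by simp [Matrix.one_fin_two],
    by simp [Matrix.one_fin_two]⟩

private def unipotentLower : (Matrix (Fin 2) (Fin 2) ℤ)ˣ :=
  ⟨!![1, 0; 1, 1], !![1, 0; -1, 1],
    by simp [Matrix.one_fin_two],
    by simp [Matrix.one_fin_two]⟩

private theorem unipotentUpper_pow (n : ℕ) :
    (unipotentUpper : Matrix (Fin 2) (Fin 2) ℤ) ^ n = !![1, (n : ℤ); 0, 1] := by
  induction n with
  | zero => simp [Matrix.one_fin_two]
  | succ n ih =>
    rw [pow_succ, ih]
    push_cast
    norm_num [unipotentUpper, Matrix.mul_fin_two, add_comm]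

private theorem unipotentLower_pow (n : ℕ) :
    (unipotentLower : Matrix (Fin 2) (Fin 2) ℤ) ^ n = !![1, 0; (n : ℤ), 1] := by
  induction n with
  | zero => simp [Matrix.one_fin_two]
  | succ n ih =>
    rw [pow_succ, ih]
    push_cast
    norm_num [unipotentLower, Matrix.mul_fin_two, add_comm]

/-- Seen through the representation `true ↦ [[1,1],[0,1]]`, `false ↦ [[1,0],[1,1]]`: the two
products of the powers differ in their top-left entries `1 + m n` and `1`. -/
theorem not_commute_of_pow_of_pow {m n : ℕ} (hm : m ≠ 0) (hn : n ≠ 0) :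
    ¬ Commute (of true ^ m) (of false ^ n) := by
  intro h
  have h' := congrArg (FreeGroup.lift fun b => if b then unipotentUpper else unipotentLower) h.eq
  simp only [_root_.map_mul, _root_.map_pow, lift_apply_of, Bool.false_eq_true, if_true,
    if_false] at h'
  have h00 :=
    congrArg (fun u : (Matrix (Fin 2) (Fin 2) ℤ)ˣ => (u : Matrix (Fin 2) (Fin 2) ℤ) 0 0) h'
  simp only [Units.val_mul, Units.val_pow_eq_pow_val, unipotentUpper_pow, unipotentLower_pow,
    Matrix.mul_fin_two] at h00
  norm_num at h00
  exact h00.elim hm hn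

theorem exists_not_commute_of_finiteIndex (L : Subgroup (FreeGroup Bool)) [L.FiniteIndex] :
    ∃ x y : L, ¬ Commute x y := by
  obtain ⟨m, hm, -, hmL⟩ := L.exists_pow_mem_of_index_ne_zero L.index_ne_zero_of_finite (of true)
  obtain ⟨n, hn, -, hnL⟩ := L.exists_pow_mem_of_index_ne_zero L.index_ne_zero_of_finite (of false)
  exact ⟨⟨_, hmL⟩, ⟨_, hnL⟩, fun h =>
    not_commute_of_pow_of_pow hm.ne' hn.ne' (congrArg Subtype.val h.eq)⟩

end FreeGroup

theorem IsFreeGroup.exists_injective_freeGroup_bool (F : Type*) [Group F] [IsFreeGroup F]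
    (hF : ∃ x y : F, ¬ Commute x y) : ∃ j : FreeGroup Bool →* F, Function.Injective j := by
  obtain ⟨x, y, hxy⟩ := hF
  let e := IsFreeGroup.toFreeGroup F
  have : Nontrivial (IsFreeGroup.Generators F) := by
    refine not_subsingleton_iff_nontrivial.1 fun _ => hxy ?_
    simpa only [Commute, SemiconjBy, ← map_mul, e.apply_eq_iff_eq] using
      FreeGroup.commute_of_subsingleton (e x) (e y)
  obtain ⟨s, t, hst⟩ := exists_pair_ne (IsFreeGroup.Generators F)
  have hinj : Function.Injective fun b : Bool => if b then s else t := by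
    intro a b
    cases a <;> cases b <;> simp [hst, hst.symm]
  exact ⟨e.symm.toMonoidHom.comp (FreeGroup.map _),
    e.symm.injective.comp (FreeGroup.map_injective hinj)⟩

theorem FreeGroup.exists_injective_bool_of_finiteIndex (L : Subgroup (FreeGroup Bool))
    [L.FiniteIndex] : ∃ j : FreeGroup Bool →* L, Function.Injective j :=
  IsFreeGroup.exists_injective_freeGroup_bool L (exists_not_commute_of_finiteIndex L)

/-- If `H` has finite index in `G` then `rk_F(H) = rk_F(G)`. -/
theorem stmt3 {G : Type*} [Group G] (H : Subgroup G) (hfi : H.FiniteIndex) (k : ℕ) :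
    HasProdRank H k ↔ HasProdRank G k := by
  refine ⟨fun ⟨f, hf⟩ => ⟨H.subtype.comp f, H.subtype_injective.comp hf⟩, fun ⟨f, hf⟩ => ?_⟩
  obtain ⟨j, hj⟩ := (H.comap f).exists_injective_pi_of_finiteIndex fun _ L _ =>
    FreeGroup.exists_injective_bool_of_finiteIndex L
  exact ⟨(f.subgroupComap H).comp j,
    fun x y hxy => hj (Subtype.ext (hf (congrArg Subtype.val hxy)))⟩
end

section
/- If a subgroup H of GL(2,ℤ) consists entirely of matrices of determinant 1 and trace 2 (together with the identity), then H is cyclic; in fact H is conjugate into the group of upper unitriangular matrices. -/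
/-!
Every element of `H`, the identity included, has determinant 1 and trace 2, and so does each
of its conjugates. Such an `A ≠ 1` is unipotent: by Cayley–Hamilton `(A - 1)² = 0`, so the
primitive vector along the first row of `A - 1` is a left fixed vector of `A`, and completing
it to an element of `SL(2, ℤ)` conjugates `A` to `U = [[1, s], [0, 1]]` with `s ≠ 0`. For any
other `B = [[x, y], [z, t]]` in the conjugated group, `tr (B U) = tr B + s z` forces `z = 0`,
and then `det B = 1`, `tr B = 2` force `x = t = 1`. The upper right entry is then an injective
homomorphism from `H` to `ℤ`.
-/

open Matrix

def IsUpperUnitriangular {R : Type*} [Semiring R] (U : Matrix (Fin 2) (Fin 2) R) : Prop :=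
  U 1 0 = 0 ∧ U 0 0 = 1 ∧ U 1 1 = 1

section CommRing

variable {R : Type*} [CommRing R]

theorem isUpperUnitriangular_one : IsUpperUnitriangular (1 : Matrix (Fin 2) (Fin 2) R) := by
  simp [IsUpperUnitriangular]

namespace IsUpperUnitriangular

variable {U V : Matrix (Fin 2) (Fin 2) R}

theorem of_row_one_eq (hU : U 1 = (1 : Matrix (Fin 2) (Fin 2) R) 1) (htr : U.trace = 2) :
    IsUpperUnitriangular U := by
  have h10 : U 1 0 = 0 := by simpa using congrFun hU 0
  have h11 : U 1 1 = 1 := by simpa using congrFun hU 1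
  rw [trace_fin_two, h11] at htr
  exact ⟨h10, by linear_combination htr, h11⟩

theorem mul_apply_zero_one (hU : IsUpperUnitriangular U) (hV : IsUpperUnitriangular V) :
    (U * V) 0 1 = U 0 1 + V 0 1 := by
  simp [mul_apply, hU.2.1, hV.2.2, add_comm]

theorem ext (hU : IsUpperUnitriangular U) (hV : IsUpperUnitriangular V) (h : U 0 1 = V 0 1) :
    U = V := by
  ext i j
  fin_cases i <;> fin_cases j
  exacts [hU.2.1.trans hV.2.1.symm, h, hU.1.trans hV.1.symm, hU.2.2.trans hV.2.2.symm]

theorem of_trace_mul [IsDomain R] {B : Matrix (Fin 2) (Fin 2) R} (hU : IsUpperUnitriangular U)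
    (hU01 : U 0 1 ≠ 0) (hdet : B.det = 1) (htr : B.trace = 2) (hBU : (B * U).trace = 2) :
    IsUpperUnitriangular B := by
  obtain ⟨hU10, hU00, hU11⟩ := hU
  rw [trace_fin_two] at htr hBU
  rw [det_fin_two] at hdet
  simp only [mul_apply, Fin.sum_univ_two, hU10, hU00, hU11] at hBU
  have hB10 : B 1 0 = 0 := by
    refine (mul_eq_zero.mp ?_).resolve_right hU01
    linear_combination hBU - htr
  rw [hB10] at hdet
  have hB00 : B 0 0 = 1 := by
    refine sub_eq_zero.mp (pow_eq_zero_iff two_ne_zero |>.mp ?_)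
    linear_combination B 0 0 * htr - hdet
  exact ⟨hB10, hB00, by linear_combination htr - hB00⟩

end IsUpperUnitriangular

theorem conj_row_eq_of_vecMul_eq_self {n : Type*} [Fintype n] [DecidableEq n] (g : GL n R)
    (A : Matrix n n R) (i : n) (h : (g : Matrix n n R) i ᵥ* A = (g : Matrix n n R) i) :
    ((g : Matrix n n R) * A * (g⁻¹ : GL n R)) i = (1 : Matrix n n R) i := by
  rw [mul_apply_eq_vecMul, mul_apply_eq_vecMul, h, ← mul_apply_eq_vecMul, ← Units.val_mul,
    mul_inv_cancel, Units.val_one]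

theorem trace_coe_inv_mul_mul {n : Type*} [Fintype n] [DecidableEq n] (P M : GL n R) :
    ((P⁻¹ * M * P : GL n R) : Matrix n n R).trace = (M : Matrix n n R).trace := by
  rw [Units.val_mul, Units.val_mul, trace_units_conj']

theorem exists_conj_isUpperUnitriangular_of_vecMul_eq_self (A : GL (Fin 2) R)
    (htr : (A : Matrix (Fin 2) (Fin 2) R).trace = 2) (w : Fin 2 → R)
    (hw : IsCoprime (w 0) (w 1)) (hwA : w ᵥ* (A : Matrix (Fin 2) (Fin 2) R) = w) :
    ∃ P : GL (Fin 2) R,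
      IsUpperUnitriangular ((P⁻¹ * A * P : GL (Fin 2) R) : Matrix (Fin 2) (Fin 2) R) := by
  obtain ⟨g, -, hg⟩ := ModularGroup.bottom_row_surj hw
  refine ⟨(g : GL (Fin 2) R)⁻¹, .of_row_one_eq ?_ ?_⟩
  · rw [inv_inv, Units.val_mul, Units.val_mul]
    exact conj_row_eq_of_vecMul_eq_self _ _ _ (by simpa [hg] using hwA)
  · rw [trace_coe_inv_mul_mul, htr]

end CommRing

theorem exists_isCoprime_vecMul_eq_self (A : Matrix (Fin 2) (Fin 2) ℤ) (hdet : A.det = 1)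
    (htr : A.trace = 2) : ∃ w : Fin 2 → ℤ, IsCoprime (w 0) (w 1) ∧ w ᵥ* A = w := by
  rw [det_fin_two] at hdet
  rw [trace_fin_two] at htr
  by_cases hab : A 0 0 - 1 = 0 ∧ A 0 1 = 0
  · refine ⟨![1, 0], isCoprime_one_left, ?_⟩
    ext j; fin_cases j <;> simp [vecMul, dotProduct, hab.2, sub_eq_zero.mp hab.1]
  · obtain ⟨g, a, b, hg, hgcd, ha, hb⟩ :=
      Int.exists_gcd_one' (Int.gcd_pos_iff.mpr (not_and_or.mp hab))
    refine ⟨![a, b], Int.isCoprime_iff_gcd_eq_one.mpr hgcd, ?_⟩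
    have hg0 : (g : ℤ) ≠ 0 := by exact_mod_cast hg.ne'
    ext j; fin_cases j
    · have h : (g : ℤ) * (a * A 0 0 + b * A 1 0 - a) = 0 := by
        linear_combination A 0 0 * htr - hdet - (A 0 0 - 1) * ha - A 1 0 * hb
      simpa [vecMul, dotProduct, sub_eq_zero] using (mul_eq_zero.mp h).resolve_left hg0
    · simp only [vecMul, dotProduct, Fin.mk_one, Fin.isValue, Fin.sum_univ_two, cons_val_zero,
        cons_val_one, cons_val_fin_one]
      linear_combination a * hb + b * htr - b * ha

theorem exists_conj_isUpperUnitriangular_of_forall_det_trace (H : Subgroup (GL (Fin 2) ℤ))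
    (hH : ∀ M ∈ H, (M : Matrix (Fin 2) (Fin 2) ℤ).det = 1 ∧
      (M : Matrix (Fin 2) (Fin 2) ℤ).trace = 2) :
    ∃ P : GL (Fin 2) ℤ, ∀ M ∈ H,
      IsUpperUnitriangular ((P⁻¹ * M * P : GL (Fin 2) ℤ) : Matrix (Fin 2) (Fin 2) ℤ) := by
  obtain rfl | ⟨M₀, hM₀, hne⟩ := H.bot_or_exists_ne_one
  · refine ⟨1, fun M hM => ?_⟩
    rw [Subgroup.mem_bot.mp hM]
    simpa using isUpperUnitriangular_one
  obtain ⟨w, hw, hwM₀⟩ := exists_isCoprime_vecMul_eq_self _ (hH M₀ hM₀).1 (hH M₀ hM₀).2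
  obtain ⟨P, hP₀⟩ :=
    exists_conj_isUpperUnitriangular_of_vecMul_eq_self M₀ (hH M₀ hM₀).2 w hw hwM₀
  have hP₀01 : ((P⁻¹ * M₀ * P : GL (Fin 2) ℤ) : Matrix (Fin 2) (Fin 2) ℤ) 0 1 ≠ 0 := by
    intro h
    have hconj : P⁻¹ * M₀ * P = 1 :=
      Units.ext (hP₀.ext isUpperUnitriangular_one (by simpa using h))
    exact hne (by simpa [mul_eq_one_iff_eq_inv] using hconj)
  refine ⟨P, fun M hM => hP₀.of_trace_mul hP₀01 ?_ ?_ ?_⟩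
  · rw [Units.val_mul, Units.val_mul, det_units_conj']
    exact (hH M hM).1
  · rw [trace_coe_inv_mul_mul]
    exact (hH M hM).2
  · rw [← Units.val_mul, show P⁻¹ * M * P * (P⁻¹ * M₀ * P) = P⁻¹ * (M * M₀) * P by group,
      trace_coe_inv_mul_mul]
    exact (hH _ (H.mul_mem hM hM₀)).2

theorem isCyclic_of_forall_isUpperUnitriangular_conj (H : Subgroup (GL (Fin 2) ℤ))
    (P : GL (Fin 2) ℤ) (hP : ∀ M ∈ H,
      IsUpperUnitriangular ((P⁻¹ * M * P : GL (Fin 2) ℤ) : Matrix (Fin 2) (Fin 2) ℤ)) :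
    IsCyclic H := by
  let φ : H →* Multiplicative ℤ :=
    { toFun := fun M => .ofAdd (((P⁻¹ * M * P : GL (Fin 2) ℤ) : Matrix (Fin 2) (Fin 2) ℤ) 0 1)
      map_one' := by simp
      map_mul' := fun M N => by
        have hconj : P⁻¹ * (M * N : H) * P = (P⁻¹ * M * P) * (P⁻¹ * N * P) := by
          rw [Subgroup.coe_mul]; group
        rw [hconj, Units.val_mul, (hP M M.2).mul_apply_zero_one (hP N N.2), ofAdd_add] }
  refine isCyclic_of_injective φ fun M N h => Subtype.ext ?_
  have hMN := (hP M M.2).ext (hP N N.2) (Multiplicative.ofAdd.injective h)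
  simpa using Units.ext hMN

/-- A subgroup of `GL(2,ℤ)` all of whose nonidentity elements have
determinant 1 and trace 2 is cyclic, and indeed is conjugate into the group of
upper unitriangular matrices. -/
theorem stmt5 (H : Subgroup (GL (Fin 2) ℤ))
    (hH : ∀ M ∈ H, M ≠ 1 →
      ((M : Matrix (Fin 2) (Fin 2) ℤ)).det = 1 ∧
      Matrix.trace ((M : Matrix (Fin 2) (Fin 2) ℤ)) = 2) :
    IsCyclic ↥H ∧
    ∃ P : GL (Fin 2) ℤ, ∀ M ∈ H,
      (((P⁻¹ * M * P : GL (Fin 2) ℤ) : Matrix (Fin 2) (Fin 2) ℤ) 1 0 = 0 ∧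
       ((P⁻¹ * M * P : GL (Fin 2) ℤ) : Matrix (Fin 2) (Fin 2) ℤ) 0 0 = 1 ∧
       ((P⁻¹ * M * P : GL (Fin 2) ℤ) : Matrix (Fin 2) (Fin 2) ℤ) 1 1 = 1) := by
  have hdet_trace : ∀ M ∈ H, (M : Matrix (Fin 2) (Fin 2) ℤ).det = 1 ∧
      (M : Matrix (Fin 2) (Fin 2) ℤ).trace = 2 := by
    intro M hM
    rcases eq_or_ne M 1 with rfl | hne
    · simp
    · exact hH M hM hne
  obtain ⟨P, hP⟩ := exists_conj_isUpperUnitriangular_of_forall_det_trace H hdet_trace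
  exact ⟨isCyclic_of_forall_isUpperUnitriangular_conj H P hP, P, hP⟩
end

section
/- Let τ_0, τ_1 ∈ Aut(F_2) be Nielsen transformations. If ⟨τ_0⟩ ∩ ⟨τ_1⟩ ≠ 1, then τ_0 = τ_1 or τ_0 = τ_1⁻¹. -/
/-!
Write `x₁ = of true`, `x₂ = of false` and `τ = nielsenTau`. Every element of `F₂` has a unique
syllable normal form `x₂^{m₀} x₁^{±1} x₂^{m₁} ⋯ x₁^{±1} x₂^{m_r}`; uniqueness comes from van der
Waerden's trick of letting `F₂` act on the set of normal forms. As `τ^k` fixes `x₂` and sends `x₁`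
to `x₁x₂^k`, it acts on normal forms by adding `k` times a fixed integer vector to the exponents,
so `Fix(τ^k) = Fix(τ)` for `k ≠ 0`. Since `Fix(τ)` contains `x₂` and `x₁x₂x₁⁻¹` and the centralizer
of `x₂` is `⟨x₂⟩`, an automorphism fixing `Fix(τ)` pointwise is a power of `τ`.

Transporting this by conjugation, if `τ₀^p = τ₁^q` with `p, q ≠ 0` for Nielsen transformations,
then `Fix τ₀ = Fix τ₀^p = Fix τ₁^q = Fix τ₁`, so each of `τ₀, τ₁` is a power of the other; as they
have infinite order, `τ₀ = τ₁^{±1}`.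
-/

/-- The endomorphism of `F₂ = FreeGroup Bool` sending `x₁ = of true ↦ x₁x₂` and
`x₂ = of false ↦ x₂`. -/
def nielsenHom : FreeGroup Bool →* FreeGroup Bool :=
  FreeGroup.lift fun b =>
    bif b then FreeGroup.of true * FreeGroup.of false else FreeGroup.of false

/-- Its inverse, sending `x₁ ↦ x₁x₂⁻¹`, `x₂ ↦ x₂`. -/
def nielsenHomInv : FreeGroup Bool →* FreeGroup Bool :=
  FreeGroup.lift fun b =>
    bif b then FreeGroup.of true * (FreeGroup.of false)⁻¹ else FreeGroup.of false

/-- The standard Nielsen transformation `τ₀ ∈ Aut(F₂)`: `x₁ ↦ x₁x₂`, `x₂ ↦ x₂`. -/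
def nielsenTau : MulAut (FreeGroup Bool) :=
  MonoidHom.toMulEquiv nielsenHom nielsenHomInv
    (FreeGroup.ext_hom _ _ (by rintro (_ | _) <;> simp [nielsenHom, nielsenHomInv]))
    (FreeGroup.ext_hom _ _ (by rintro (_ | _) <;> simp [nielsenHom, nielsenHomInv]))

/-- An automorphism of `F₂` is a Nielsen transformation if, with respect to some basis,
it is given by `x₁ ↦ x₁x₂`, `x₂ ↦ x₂`; equivalently it is conjugate in `Aut(F₂)` to the
standard Nielsen transformation. -/
def IsNielsen (τ : MulAut (FreeGroup Bool)) : Prop :=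
  ∃ σ : MulAut (FreeGroup Bool), τ = σ * nielsenTau * σ⁻¹

/-- The fixed subgroup of an automorphism. -/
def fixedSubgroup (φ : MulAut (FreeGroup Bool)) : Subgroup (FreeGroup Bool) where
  carrier := {x | φ x = x}
  one_mem' := map_one φ
  mul_mem' := by intro a b ha hb; simp only [Set.mem_setOf_eq, map_mul] at *; rw [ha, hb]
  inv_mem' := by intro a ha; simp only [Set.mem_setOf_eq, map_inv] at *; rw [ha]

local notation "F₂" => FreeGroup Bool

section MulAut

variable {G : Type*} [Group G] {φ : MulAut G} {v w : G}

lemma MulAut.zpow_apply_of_apply_eq (hw : φ w = w) (k : ℤ) : (φ ^ k) w = w := by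
  have h := Function.IsFixedPt.perm_zpow (e := MulAut.toPerm G φ) hw k
  rwa [← map_zpow] at h

lemma MulAut.zpow_apply_of_apply_eq_mul (hw : φ w = w) (hv : φ v = v * w) (k : ℤ) :
    (φ ^ k) v = v * w ^ k := by
  induction k using Int.induction_on with
  | zero => simp
  | succ k ih => rw [zpow_add_one, MulAut.mul_apply, hv, map_mul, ih, zpow_apply_of_apply_eq hw,
      zpow_add_one, mul_assoc]
  | pred k ih =>
    have hv' : φ⁻¹ v = v * w⁻¹ := by
      rw [MulAut.inv_apply, MulEquiv.symm_apply_eq, map_mul, map_inv, hv, hw, mul_inv_cancel_right]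
    rw [zpow_sub_one, MulAut.mul_apply, hv', map_mul, ih, map_inv, zpow_apply_of_apply_eq hw,
      zpow_sub_one, mul_assoc]

end MulAut

lemma Subgroup.exists_zpow_eq_zpow_of_inf_zpowers_ne_bot {G : Type*} [Group G] {g h : G}
    (H : zpowers g ⊓ zpowers h ≠ ⊥) : ∃ p q : ℤ, p ≠ 0 ∧ q ≠ 0 ∧ g ^ p = h ^ q := by
  obtain ⟨⟨x, hx⟩, hx₁⟩ := Subgroup.ne_bot_iff_exists_ne_one.1 H
  obtain ⟨p, rfl⟩ := Subgroup.mem_zpowers_iff.1 (Subgroup.mem_inf.1 hx).1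
  obtain ⟨q, hq⟩ := Subgroup.mem_zpowers_iff.1 (Subgroup.mem_inf.1 hx).2
  have hx₁ : g ^ p ≠ 1 := fun h₁ => hx₁ (Subtype.ext h₁)
  refine ⟨p, q, ?_, ?_, hq.symm⟩
  · rintro rfl
    exact hx₁ (zpow_zero g)
  · rintro rfl
    exact hx₁ (by rw [← hq, zpow_zero])

namespace Nielsen

abbrev x₁ : F₂ := FreeGroup.of true
abbrev x₂ : F₂ := FreeGroup.of false

def signedX₁ (ε : Bool) : F₂ := bif ε then x₁ else x₁⁻¹

namespace NormalForm

/-- A syllable `(ε, m)` stands for `x₁^{±1} x₂^m`, with sign `+` iff `ε = true`. -/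
def evalTail : List (Bool × ℤ) → F₂
  | [] => 1
  | (ε, m) :: r => signedX₁ ε * x₂ ^ m * evalTail r

/-- Rules out `x₁^{±1} x₂^0 x₁^{∓1}`. -/
def Reduced (L : List (Bool × ℤ)) : Prop := L.IsChain fun s t => s.1 ≠ t.1 → s.2 ≠ 0

end NormalForm

/-- The syllable normal form `x₂^{m₀} x₁^{±1} x₂^{m₁} ⋯ x₁^{±1} x₂^{m_r}` of an element of `F₂`. -/
@[ext]
structure NormalForm where
  head : ℤ
  tail : List (Bool × ℤ)
  reduced : NormalForm.Reduced tail

namespace NormalForm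

def eval (n : NormalForm) : F₂ := x₂ ^ n.head * evalTail n.tail

instance : One NormalForm := ⟨⟨0, [], List.isChain_nil⟩⟩

lemma evalTail_append (L L' : List (Bool × ℤ)) :
    evalTail (L ++ L') = evalTail L * evalTail L' := by
  induction L with
  | nil => simp [evalTail]
  | cons s r ih => simp [evalTail, ih, mul_assoc]

lemma reduced_concat_iff {L : List (Bool × ℤ)} {ε : Bool} {m m' : ℤ} :
    Reduced (L ++ [(ε, m)]) ↔ Reduced (L ++ [(ε, m')]) := by
  simp [Reduced, List.isChain_append]

def consX₁ (ε : Bool) (n : NormalForm) : NormalForm :=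
  match n with
  | ⟨m₀, [], _⟩ => ⟨0, [(ε, m₀)], List.isChain_singleton _⟩
  | ⟨m₀, (ε', m₁) :: r, h⟩ =>
    if hc : m₀ = 0 ∧ ε' = !ε then ⟨m₁, r, h.tail⟩
    else ⟨0, (ε, m₀) :: (ε', m₁) :: r, List.isChain_cons_cons.2
      ⟨fun hne hm => hc ⟨hm, by cases ε <;> cases ε' <;> simp_all⟩, h⟩⟩

lemma eval_consX₁ (ε : Bool) (n : NormalForm) : (consX₁ ε n).eval = signedX₁ ε * n.eval := by
  rcases n with ⟨m₀, _ | ⟨⟨ε', m₁⟩, r⟩, h⟩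
  · cases ε <;> simp [consX₁, eval, evalTail, signedX₁]
  · by_cases hc : m₀ = 0 ∧ ε' = !ε
    · obtain ⟨rfl, rfl⟩ := hc
      cases ε <;> simp [consX₁, eval, evalTail, signedX₁, mul_assoc]
    · simp [consX₁, hc, eval, evalTail, mul_assoc]

lemma consX₁_of_reduced (ε : Bool) (m : ℤ) (r : List (Bool × ℤ))
    (h : Reduced ((ε, m) :: r)) : consX₁ ε ⟨m, r, h.tail⟩ = ⟨0, (ε, m) :: r, h⟩ := by
  rcases r with _ | ⟨⟨ε', m₁⟩, r⟩
  · rfl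
  · have hc : ¬(m = 0 ∧ ε' = !ε) := by
      rintro ⟨hm, rfl⟩
      exact (List.isChain_cons_cons.1 h).1 (by cases ε <;> simp) hm
    simp [consX₁, hc]

lemma consX₁_not_consX₁ (ε : Bool) (n : NormalForm) : consX₁ (!ε) (consX₁ ε n) = n := by
  rcases n with ⟨m₀, _ | ⟨⟨ε', m₁⟩, r⟩, h⟩
  · simp [consX₁]
  · by_cases hc : m₀ = 0 ∧ ε' = !ε
    · obtain ⟨rfl, rfl⟩ := hc
      simpa [consX₁] using consX₁_of_reduced (!ε) m₁ r h
    · simp [consX₁, hc]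

def x₁Perm : Equiv.Perm NormalForm where
  toFun := consX₁ true
  invFun := consX₁ false
  left_inv := consX₁_not_consX₁ true
  right_inv := consX₁_not_consX₁ false

def x₂Perm : Equiv.Perm NormalForm where
  toFun n := ⟨n.head + 1, n.tail, n.reduced⟩
  invFun n := ⟨n.head - 1, n.tail, n.reduced⟩
  left_inv n := by simp
  right_inv n := by simp

def act : F₂ →* Equiv.Perm NormalForm := FreeGroup.lift fun i => bif i then x₁Perm else x₂Perm

lemma act_signedX₁ (ε : Bool) (n : NormalForm) : act (signedX₁ ε) n = consX₁ ε n := by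
  cases ε
  · rw [signedX₁, cond_false, map_inv, Equiv.Perm.inv_eq_iff_eq]
    exact (consX₁_not_consX₁ false n).symm
  · rfl

lemma act_x₂_zpow (k : ℤ) (n : NormalForm) :
    act (x₂ ^ k) n = ⟨n.head + k, n.tail, n.reduced⟩ := by
  have hx₂ : act x₂ = x₂Perm := FreeGroup.lift_apply_of
  induction k using Int.induction_on generalizing n with
  | zero => simp
  | succ k ih =>
    rw [zpow_add_one, map_mul, Equiv.Perm.mul_apply, hx₂, ih]
    ext <;> simp [x₂Perm]; ring
  | pred k ih =>
    rw [zpow_sub_one, map_mul, Equiv.Perm.mul_apply, map_inv, hx₂, ih]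
    ext <;> simp [x₂Perm, Equiv.Perm.inv_def]; ring

lemma eval_act (w : F₂) (n : NormalForm) : (act w n).eval = w * n.eval := by
  induction w using FreeGroup.induction_on generalizing n with
  | C1 => simp
  | of i =>
    cases i
    · change (act x₂ n).eval = x₂ * n.eval
      rw [← zpow_one x₂, act_x₂_zpow, eval, eval]
      group
    · exact eval_consX₁ true n
  | inv_of x ih =>
    rw [eq_inv_mul_iff_mul_eq, ← ih, ← Equiv.Perm.mul_apply, ← map_mul, mul_inv_cancel, map_one,
      Equiv.Perm.one_apply]
  | mul x y hx hy => rw [map_mul, Equiv.Perm.mul_apply, hx, hy, mul_assoc]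

lemma act_evalTail_one {L : List (Bool × ℤ)} (h : Reduced L) :
    act (evalTail L) 1 = ⟨0, L, h⟩ := by
  induction L with
  | nil => rfl
  | cons s r ih =>
    obtain ⟨ε, m⟩ := s
    rw [evalTail, map_mul, map_mul, Equiv.Perm.mul_apply, Equiv.Perm.mul_apply, ih h.tail,
      act_x₂_zpow, act_signedX₁, zero_add, consX₁_of_reduced ε m r h]

lemma act_eval_one (n : NormalForm) : act n.eval 1 = n := by
  rw [eval, map_mul, Equiv.Perm.mul_apply, act_evalTail_one n.reduced, act_x₂_zpow]
  ext <;> simp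

@[simp] lemma eval_one : (1 : NormalForm).eval = 1 := by
  simp [eval, evalTail, show (1 : NormalForm).head = 0 from rfl]

lemma eval_injective : Function.Injective eval :=
  Function.LeftInverse.injective (g := fun w => act w 1) act_eval_one

lemma eval_surjective : Function.Surjective eval := fun w => ⟨act w 1, by simpa using eval_act w 1⟩

end NormalForm

lemma nielsenTau_x₁ : nielsenTau x₁ = x₁ * x₂ := by
  simp [nielsenTau, nielsenHom]

lemma nielsenTau_x₂ : nielsenTau x₂ = x₂ := by
  simp [nielsenTau, nielsenHom]

lemma nielsenTau_zpow_x₂ (k : ℤ) : (nielsenTau ^ k) x₂ = x₂ :=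
  MulAut.zpow_apply_of_apply_eq nielsenTau_x₂ k

lemma nielsenTau_zpow_x₁ (k : ℤ) : (nielsenTau ^ k) x₁ = x₁ * x₂ ^ k :=
  MulAut.zpow_apply_of_apply_eq_mul nielsenTau_x₂ nielsenTau_x₁ k

lemma mulAut_ext {φ ψ : MulAut F₂} (h₁ : φ x₁ = ψ x₁) (h₂ : φ x₂ = ψ x₂) : φ = ψ :=
  MulEquiv.toMonoidHom_injective <| FreeGroup.ext_hom _ _ fun i => by cases i <;> assumption

namespace NormalForm

/-- `τ^k` turns a leading `x₁⁻¹` into `x₂^{-k} x₁⁻¹`. -/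
def leadShift : List (Bool × ℤ) → ℤ
  | (false, _) :: _ => -1
  | _ => 0

@[simp] lemma leadShift_nil : leadShift [] = 0 := rfl
@[simp] lemma leadShift_cons_true (m : ℤ) (r : List (Bool × ℤ)) :
    leadShift ((true, m) :: r) = 0 := rfl
@[simp] lemma leadShift_cons_false (m : ℤ) (r : List (Bool × ℤ)) :
    leadShift ((false, m) :: r) = -1 := rfl

def twistTail (k : ℤ) : List (Bool × ℤ) → List (Bool × ℤ)
  | [] => []
  | (ε, m) :: r => (ε, m + k * ((bif ε then 1 else 0) + leadShift r)) :: twistTail k r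

lemma reduced_twistTail (k : ℤ) {L : List (Bool × ℤ)} (h : Reduced L) :
    Reduced (twistTail k L) := by
  induction L with
  | nil => exact h
  | cons s r ih =>
    obtain ⟨ε, m⟩ := s
    rcases r with _ | ⟨⟨ε', m'⟩, r⟩
    · exact List.isChain_singleton _
    · refine List.isChain_cons_cons.2 ⟨fun hne => ?_, ih h.tail⟩
      have := (List.isChain_cons_cons.1 h).1 hne
      cases ε <;> cases ε' <;> simp_all [leadShift]

def twist (k : ℤ) (n : NormalForm) : NormalForm :=
  ⟨n.head + k * leadShift n.tail, twistTail k n.tail, reduced_twistTail k n.reduced⟩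

lemma nielsenTau_zpow_evalTail (k : ℤ) (L : List (Bool × ℤ)) :
    (nielsenTau ^ k) (evalTail L) = x₂ ^ (k * leadShift L) * evalTail (twistTail k L) := by
  induction L with
  | nil => simp [evalTail, twistTail]
  | cons s r ih =>
    obtain ⟨ε, m⟩ := s
    cases ε <;>
    · simp only [evalTail, twistTail, signedX₁, cond_true, cond_false, leadShift_cons_true,
        leadShift_cons_false, map_mul, map_inv, map_zpow, ih, nielsenTau_zpow_x₁, nielsenTau_zpow_x₂]
      group

lemma nielsenTau_zpow_eval (k : ℤ) (n : NormalForm) :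
    (nielsenTau ^ k) n.eval = (twist k n).eval := by
  rw [eval, eval, map_mul, map_zpow, nielsenTau_zpow_x₂, nielsenTau_zpow_evalTail, twist,
    ← mul_assoc, ← zpow_add]

lemma twistTail_eq_self_iff {k : ℤ} (hk : k ≠ 0) {L : List (Bool × ℤ)} :
    twistTail k L = L ↔ twistTail 1 L = L := by
  induction L with
  | nil => simp [twistTail]
  | cons s r ih =>
    obtain ⟨ε, m⟩ := s
    cases ε <;> simp [twistTail, ih, hk]

lemma twist_eq_self_iff {k : ℤ} (hk : k ≠ 0) {n : NormalForm} : twist k n = n ↔ twist 1 n = n := by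
  simp [twist, NormalForm.ext_iff, twistTail_eq_self_iff hk, hk]

end NormalForm

@[simp] lemma mem_fixedSubgroup {φ : MulAut F₂} {w : F₂} : w ∈ fixedSubgroup φ ↔ φ w = w := Iff.rfl

lemma fixedSubgroup_nielsenTau_zpow {k : ℤ} (hk : k ≠ 0) :
    fixedSubgroup (nielsenTau ^ k) = fixedSubgroup nielsenTau := by
  ext w
  obtain ⟨n, rfl⟩ := NormalForm.eval_surjective w
  conv_rhs => rw [← zpow_one nielsenTau]
  simp only [mem_fixedSubgroup, NormalForm.nielsenTau_zpow_eval,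
    NormalForm.eval_injective.eq_iff, NormalForm.twist_eq_self_iff hk]

/-- Right multiplication by `x₂` changes the last exponent of a nonempty normal form, left
multiplication its head. -/
lemma mem_zpowers_x₂_of_commute {w : F₂} (h : Commute w x₂) : w ∈ Subgroup.zpowers x₂ := by
  obtain ⟨⟨m₀, L, hL⟩, rfl⟩ := NormalForm.eval_surjective w
  rcases L.eq_nil_or_concat' with rfl | ⟨L, ⟨ε, m⟩, rfl⟩
  · exact ⟨m₀, by simp [NormalForm.eval, NormalForm.evalTail]⟩
  set n : NormalForm := ⟨m₀, L ++ [(ε, m)], hL⟩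
  have hright : n.eval * x₂ = NormalForm.eval ⟨m₀, L ++ [(ε, m + 1)],
      NormalForm.reduced_concat_iff.1 hL⟩ := by
    simp [n, NormalForm.eval, NormalForm.evalTail_append, NormalForm.evalTail, zpow_add_one,
      mul_assoc]
  have hleft : x₂ * n.eval = NormalForm.eval ⟨m₀ + 1, L ++ [(ε, m)], hL⟩ := by
    simp only [n, NormalForm.eval]
    group
  have := congrArg NormalForm.head (NormalForm.eval_injective (hright.symm.trans (h.eq.trans hleft)))
  simp at this

lemma mem_zpowers_nielsenTau_of_fixedSubgroup_le {β : MulAut F₂}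
    (h : fixedSubgroup nielsenTau ≤ fixedSubgroup β) : β ∈ Subgroup.zpowers nielsenTau := by
  have hx₂ : β x₂ = x₂ := h nielsenTau_x₂
  have hconj : β x₁ * x₂ = x₁ * x₂ * x₁⁻¹ * β x₁ := by
    have : β (x₁ * x₂ * x₁⁻¹) = x₁ * x₂ * x₁⁻¹ :=
      h (by simp only [mem_fixedSubgroup, map_mul, map_inv, nielsenTau_x₁, nielsenTau_x₂]; group)
    rw [map_mul, map_mul, map_inv, hx₂] at this
    rw [← this]
    group
  obtain ⟨k, hk⟩ := Subgroup.mem_zpowers_iff.1 <| mem_zpowers_x₂_of_commute (w := x₁⁻¹ * β x₁) <|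
    calc x₁⁻¹ * β x₁ * x₂ = x₁⁻¹ * (β x₁ * x₂) := mul_assoc _ _ _
      _ = x₂ * (x₁⁻¹ * β x₁) := by rw [hconj]; group
  refine ⟨k, mulAut_ext ?_ (by rw [nielsenTau_zpow_x₂, hx₂])⟩
  rw [nielsenTau_zpow_x₁, hk, mul_inv_cancel_left]

lemma not_isOfFinOrder_nielsenTau : ¬IsOfFinOrder nielsenTau := by
  rw [isOfFinOrder_iff_zpow_eq_one]
  rintro ⟨k, hk, hτk⟩
  have := nielsenTau_zpow_x₁ k
  rw [hτk, MulAut.one_apply, left_eq_mul,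
    IsMulTorsionFree.zpow_eq_one_iff_right (FreeGroup.of_ne_one _)] at this
  exact hk this

lemma fixedSubgroup_conj (σ φ : MulAut F₂) :
    fixedSubgroup (MulAut.conj σ φ) = (fixedSubgroup φ).map σ.toMonoidHom := by
  ext w
  rw [Subgroup.mem_map_equiv, mem_fixedSubgroup, mem_fixedSubgroup, MulAut.conj_apply,
    MulAut.mul_apply, MulAut.mul_apply, MulAut.inv_apply, ← MulEquiv.eq_symm_apply, eq_comm]

end Nielsen

open Nielsen

lemma isNielsen_iff {τ : MulAut F₂} : IsNielsen τ ↔ ∃ σ, τ = MulAut.conj σ nielsenTau := by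
  simp [IsNielsen, MulAut.conj_apply]

namespace IsNielsen

variable {τ : MulAut F₂}

lemma fixedSubgroup_zpow (hτ : IsNielsen τ) {k : ℤ} (hk : k ≠ 0) :
    fixedSubgroup (τ ^ k) = fixedSubgroup τ := by
  obtain ⟨σ, rfl⟩ := isNielsen_iff.1 hτ
  rw [← map_zpow, fixedSubgroup_conj, fixedSubgroup_conj, fixedSubgroup_nielsenTau_zpow hk]

lemma mem_zpowers_of_fixedSubgroup_le (hτ : IsNielsen τ) {φ : MulAut F₂}
    (h : fixedSubgroup τ ≤ fixedSubgroup φ) : φ ∈ Subgroup.zpowers τ := by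
  obtain ⟨σ, rfl⟩ := isNielsen_iff.1 hτ
  obtain ⟨β, rfl⟩ : ∃ β, φ = MulAut.conj σ β := ⟨MulAut.conj σ⁻¹ φ, by simp [mul_assoc]⟩
  rw [fixedSubgroup_conj, fixedSubgroup_conj,
    Subgroup.map_le_map_iff_of_injective σ.injective] at h
  obtain ⟨k, rfl⟩ := mem_zpowers_nielsenTau_of_fixedSubgroup_le h
  exact ⟨k, (map_zpow _ _ _).symm⟩

lemma not_isOfFinOrder (hτ : IsNielsen τ) : ¬IsOfFinOrder τ := by
  obtain ⟨σ, rfl⟩ := isNielsen_iff.1 hτ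
  exact fun h => not_isOfFinOrder_nielsenTau ((isConj_iff.2 ⟨σ⁻¹, by simp [mul_assoc]⟩).isOfFinOrder h)

lemma fixedSubgroup_eq_of_zpow_eq_zpow {τ' : MulAut F₂} (hτ : IsNielsen τ) (hτ' : IsNielsen τ')
    {p q : ℤ} (hp : p ≠ 0) (hq : q ≠ 0) (h : τ ^ p = τ' ^ q) :
    fixedSubgroup τ = fixedSubgroup τ' := by
  rw [← hτ.fixedSubgroup_zpow hp, h, hτ'.fixedSubgroup_zpow hq]

end IsNielsen

/-- Nielsen transformations generating cyclic subgroups with nontrivial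
intersection agree up to inversion. -/
theorem stmt14 (τ₀ τ₁ : MulAut (FreeGroup Bool)) (h₀ : IsNielsen τ₀) (h₁ : IsNielsen τ₁)
    (h : Subgroup.zpowers τ₀ ⊓ Subgroup.zpowers τ₁ ≠ ⊥) :
    τ₀ = τ₁ ∨ τ₀ = τ₁⁻¹ := by
  obtain ⟨p, q, hp, hq, hpq⟩ := Subgroup.exists_zpow_eq_zpow_of_inf_zpowers_ne_bot h
  have hfix := h₀.fixedSubgroup_eq_of_zpow_eq_zpow h₁ hp hq hpq
  have hzpowers : Subgroup.zpowers τ₀ = Subgroup.zpowers τ₁ := le_antisymm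
    (Subgroup.zpowers_le.2 (h₁.mem_zpowers_of_fixedSubgroup_le hfix.ge))
    (Subgroup.zpowers_le.2 (h₀.mem_zpowers_of_fixedSubgroup_le hfix.le))
  exact ((Subgroup.zpowers_eq_zpowers_iff h₀.not_isOfFinOrder).1 hzpowers).imp id
    inv_eq_iff_eq_inv.1
end
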